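/- Let d ≥ 1, Ω ⊆ ℤ^d, v : ℤ^d → ℝ, E, ε ∈ ℝ, and z = E + iε. Let u, θ, φ : ℤ^d → ℂ vanish outside Ω, with φ finitely supported and supp φ ⊆ C_{R₀} for some integer R₀ ≥ 0. Assume (h u)(n) = E u(n) for every n ∈ Ω and (h θ)(n) − z θ(n) = φ(n) for every n ∈ Ω. Then for every integer r ≥ R₀, w_{∂C_r}[θ, u] = Σ_{n ∈ Ω} φ(n) u(n) + iε Σ_{n ∈ C_r ∩ Ω} θ(n) u(n). -/
import Mathlib


open scoped Classical

/-- Two points `m, n ∈ ℤ^d` are neighbors if `Σ_i |m_i − n_i| = 1`. -/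
def IsNbr {d : ℕ} (m n : Fin d → ℤ) : Prop := (∑ i, |m i - n i|) = 1

/-- The cube `C_R = {n ∈ ℤ^d : |n_i| ≤ R for all i}`. -/
def cube (d : ℕ) (R : ℤ) : Set (Fin d → ℤ) := {n | ∀ i, |n i| ≤ R}

/-- The discrete Schrödinger operator on `Ω ⊆ ℤ^d` with potential `v` and Dirichlet
boundary conditions: `(h f)(n) = Σ_{m ∈ Ω, m ~ n} f(m) + v(n) f(n)` for `n ∈ Ω`,
and `(h f)(n) = 0` for `n ∉ Ω`. -/
noncomputable def schrOp {d : ℕ} (Ω : Set (Fin d → ℤ)) (v : (Fin d → ℤ) → ℂ)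
    (f : (Fin d → ℤ) → ℂ) : (Fin d → ℤ) → ℂ :=
  fun n => if n ∈ Ω then
      (∑' m : {m : Fin d → ℤ // m ∈ Ω ∧ IsNbr m n}, f m) + v n * f n
    else 0

/-- The discrete Wronskian over `∂S`. -/
noncomputable def wron {d : ℕ} (S : Set (Fin d → ℤ)) (f g : (Fin d → ℤ) → ℂ) : ℂ :=
  ∑' m : {m : Fin d → ℤ // m ∉ S ∧ ∃ l ∈ S, IsNbr l m},
    (f m * (∑' l : {l : Fin d → ℤ // l ∈ S ∧ IsNbr l m}, g l)
      - g m * (∑' l : {l : Fin d → ℤ // l ∈ S ∧ IsNbr l m}, f l))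

section helpers
variable {d : ℕ}

lemma isNbr_symm {m n : Fin d → ℤ} (h : IsNbr m n) : IsNbr n m := by
  unfold IsNbr at h ⊢; simpa [abs_sub_comm] using h

lemma isNbr_irrefl (n : Fin d → ℤ) : ¬ IsNbr n n := by simp [IsNbr]

lemma cube_finite (d : ℕ) (R : ℤ) : (cube d R).Finite := by
  apply Set.Finite.subset (Set.Finite.pi (fun i : Fin d => Set.finite_Icc (-R) R))
  intro n hn
  simp only [Set.mem_pi, Set.mem_univ, Set.mem_Icc, forall_true_left]
  intro i
  exact abs_le.mp (hn i)

lemma cube_mono {a b : ℤ} (h : a ≤ b) : cube d a ⊆ cube d b := by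
  intro n hn i; exact le_trans (hn i) h

lemma isNbr_abs_le {m n : Fin d → ℤ} (h : IsNbr m n) (i : Fin d) : |m i - n i| ≤ 1 := by
  have h2 := Finset.single_le_sum (f := fun i => |m i - n i|)
    (fun j _ => abs_nonneg _) (Finset.mem_univ i)
  rw [show (∑ i, |m i - n i|) = 1 from h] at h2
  exact h2

lemma mem_cube_succ_of_nbr {R : ℤ} {n m : Fin d → ℤ} (hn : n ∈ cube d R)
    (h : IsNbr m n) : m ∈ cube d (R + 1) := by
  intro i
  calc |m i| = |n i + (m i - n i)| := by ring_nf
    _ ≤ |n i| + |m i - n i| := abs_add_le _ _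
    _ ≤ R + 1 := add_le_add (hn i) (isNbr_abs_le h i)

lemma nbr_finite (n : Fin d → ℤ) : {m : Fin d → ℤ | IsNbr m n}.Finite := by
  apply Set.Finite.subset (Set.Finite.pi (fun i : Fin d => Set.finite_Icc (n i - 1) (n i + 1)))
  intro m hm
  simp only [Set.mem_pi, Set.mem_univ, Set.mem_Icc, forall_true_left]
  intro i
  have := abs_le.mp (isNbr_abs_le hm i)
  constructor <;> linarith [this.1, this.2]

lemma tsum_set_eq_sum {α : Type*} {s : Set α} (hs : s.Finite) (f : α → ℂ) :
    ∑' x : s, f x = ∑ x ∈ hs.toFinset, f x := by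
  haveI := hs.fintype
  rw [tsum_fintype, ← Finset.sum_coe_sort hs.toFinset f]
  exact Fintype.sum_equiv (Equiv.subtypeEquivRight (fun x => (hs.mem_toFinset).symm)) _ _
    (fun _ => rfl)

end helpers

/-- Let `u, θ, φ` vanish outside `Ω`, with `φ` finitely supported,
`supp φ ⊆ C_{R₀}`, `h u = E u` on `Ω` and `h θ − (E+iε) θ = φ` on `Ω`. Then for every
integer `r ≥ R₀`, `w_{∂C_r}[θ, u] = Σ_{n ∈ Ω} φ(n) u(n) + iε Σ_{n ∈ C_r ∩ Ω} θ(n) u(n)`. -/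
theorem discrete_wronskian_identity
    (d : ℕ) (hd : 1 ≤ d) (Ω : Set (Fin d → ℤ)) (v : (Fin d → ℤ) → ℝ)
    (E ε : ℝ) (z : ℂ) (hz : z = (E : ℂ) + (ε : ℂ) * Complex.I)
    (u θ φ : (Fin d → ℤ) → ℂ)
    (hu0 : ∀ n, n ∉ Ω → u n = 0) (hθ0 : ∀ n, n ∉ Ω → θ n = 0)
    (hφ0 : ∀ n, n ∉ Ω → φ n = 0)
    (hφfin : (Function.support φ).Finite)
    (R₀ : ℕ) (hφsupp : Function.support φ ⊆ cube d (R₀ : ℤ))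
    (hu : ∀ n ∈ Ω, schrOp Ω (fun k => (v k : ℂ)) u n = (E : ℂ) * u n)
    (hθ : ∀ n ∈ Ω, schrOp Ω (fun k => (v k : ℂ)) θ n - z * θ n = φ n)
    (r : ℕ) (hr : R₀ ≤ r) :
    wron (cube d (r : ℤ)) θ u =
      (∑' n : ↥Ω, φ n * u n)
        + (ε : ℂ) * Complex.I * ∑' n : ↥(cube d (r : ℤ) ∩ Ω), θ n * u n := by
  classical
  -- notation
  set S : Set (Fin d → ℤ) := cube d (r : ℤ) with hSdef
  have hSfin : S.Finite := cube_finite d _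
  have hUfin : (cube d ((r : ℤ) + 1)).Finite := cube_finite d _
  set U : Finset (Fin d → ℤ) := hUfin.toFinset with hUdef
  have hSU : ∀ {n : Fin d → ℤ}, n ∈ S → n ∈ U := by
    intro n hn
    rw [hUdef, Set.Finite.mem_toFinset]
    exact cube_mono (by linarith) hn
  have hnbrU : ∀ {n m : Fin d → ℤ}, n ∈ S → IsNbr m n → m ∈ U := by
    intro n m hn h
    rw [hUdef, Set.Finite.mem_toFinset]
    exact mem_cube_succ_of_nbr hn h
  set A : (Fin d → ℤ) → (Fin d → ℤ) → ℂ := fun m n => θ m * u n - θ n * u m with hAdef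
  have hMΩfin : ∀ n : Fin d → ℤ, {m : Fin d → ℤ | m ∈ Ω ∧ IsNbr m n}.Finite :=
    fun n => (nbr_finite n).subset (fun m hm => hm.2)
  -- per-point identity
  have key : ∀ n ∈ Ω, ∑ m ∈ (hMΩfin n).toFinset, A m n
      = φ n * u n + (ε : ℂ) * Complex.I * (θ n * u n) := by
    intro n hn
    have t1 : (∑' m : {m : Fin d → ℤ // m ∈ Ω ∧ IsNbr m n}, θ m)
        = ∑ m ∈ (hMΩfin n).toFinset, θ m := tsum_set_eq_sum (hMΩfin n) θ
    have t2 : (∑' m : {m : Fin d → ℤ // m ∈ Ω ∧ IsNbr m n}, u m)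
        = ∑ m ∈ (hMΩfin n).toFinset, u m := tsum_set_eq_sum (hMΩfin n) u
    have h1 := hθ n hn
    have h2 := hu n hn
    simp only [schrOp, if_pos hn, t1, t2] at h1 h2
    have expand : ∑ m ∈ (hMΩfin n).toFinset, A m n
        = (∑ m ∈ (hMΩfin n).toFinset, θ m) * u n
          - θ n * (∑ m ∈ (hMΩfin n).toFinset, u m) := by
      rw [Finset.sum_mul, Finset.mul_sum, ← Finset.sum_sub_distrib]
    rw [expand]
    have hθs : (∑ m ∈ (hMΩfin n).toFinset, θ m) = φ n + z * θ n - (v n : ℂ) * θ n := by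
      linear_combination h1
    have hus : (∑ m ∈ (hMΩfin n).toFinset, u m) = (E : ℂ) * u n - (v n : ℂ) * u n := by
      linear_combination h2
    rw [hθs, hus, hz]
    ring
  -- row sums
  have rows : ∀ n ∈ U, (∑ m ∈ U, if n ∈ S ∧ m ∈ Ω ∧ IsNbr m n then A m n else 0)
      = (if n ∈ S ∧ n ∈ Ω then φ n * u n + (ε : ℂ) * Complex.I * (θ n * u n) else 0) := by
    intro n _
    by_cases hnS : n ∈ S
    · by_cases hnΩ : n ∈ Ω
      · rw [if_pos ⟨hnS, hnΩ⟩]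
        simp only [hnS, true_and]
        rw [← Finset.sum_filter]
        have hfe : U.filter (fun m => m ∈ Ω ∧ IsNbr m n) = (hMΩfin n).toFinset := by
          ext m
          simp only [Finset.mem_filter, Set.Finite.mem_toFinset, Set.mem_setOf_eq]
          constructor
          · rintro ⟨-, h⟩; exact h
          · intro h; exact ⟨hnbrU hnS h.2, h⟩
        rw [hfe]
        exact key n hnΩ
      · rw [if_neg (by tauto)]
        apply Finset.sum_eq_zero
        intro m _
        split_ifs with h
        · simp [hAdef, hθ0 n hnΩ, hu0 n hnΩ]
        · rfl
    · rw [if_neg (by tauto)]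
      apply Finset.sum_eq_zero
      intro m _
      rw [if_neg (by tauto)]
  -- the double sum
  have dsum : (∑ n ∈ U, ∑ m ∈ U, if n ∈ S ∧ m ∈ Ω ∧ IsNbr m n then A m n else 0)
      = ∑ n ∈ U, (if n ∈ S ∧ n ∈ Ω then φ n * u n + (ε : ℂ) * Complex.I * (θ n * u n) else 0) :=
    Finset.sum_congr rfl rows
  -- drop the Ω condition
  have dropΩ : ∀ n m : Fin d → ℤ,
      (if n ∈ S ∧ m ∈ Ω ∧ IsNbr m n then A m n else 0)
        = (if n ∈ S ∧ IsNbr m n then A m n else 0) := by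
    intro n m
    by_cases hm : m ∈ Ω
    · simp [hm]
    · have hA0 : A m n = 0 := by simp [hAdef, hθ0 m hm, hu0 m hm]
      simp [hm, hA0]
  -- split according to m ∈ S
  have splitS : ∀ n m : Fin d → ℤ,
      (if n ∈ S ∧ IsNbr m n then A m n else 0)
        = (if n ∈ S ∧ m ∈ S ∧ IsNbr m n then A m n else 0)
          + (if n ∈ S ∧ m ∉ S ∧ IsNbr m n then A m n else 0) := by
    intro n m
    by_cases h1 : n ∈ S <;> by_cases h2 : m ∈ S <;> by_cases h3 : IsNbr m n <;>
      simp [h1, h2, h3]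
  -- the symmetric part vanishes
  have sym0 : (∑ n ∈ U, ∑ m ∈ U, if n ∈ S ∧ m ∈ S ∧ IsNbr m n then A m n else 0) = 0 := by
    have hanti : ∀ n m : Fin d → ℤ,
        (if m ∈ S ∧ n ∈ S ∧ IsNbr n m then A n m else 0)
          = -(if n ∈ S ∧ m ∈ S ∧ IsNbr m n then A m n else 0) := by
      intro n m
      by_cases h : n ∈ S ∧ m ∈ S ∧ IsNbr m n
      · rw [if_pos ⟨h.2.1, h.1, isNbr_symm h.2.2⟩, if_pos h]
        simp only [hAdef]; ring
      · rw [if_neg (fun hc => h ⟨hc.2.1, hc.1, isNbr_symm hc.2.2⟩), if_neg h, neg_zero]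
    have h2 : (∑ n ∈ U, ∑ m ∈ U, if n ∈ S ∧ m ∈ S ∧ IsNbr m n then A m n else 0)
        = -(∑ n ∈ U, ∑ m ∈ U, if n ∈ S ∧ m ∈ S ∧ IsNbr m n then A m n else 0) := by
      calc (∑ n ∈ U, ∑ m ∈ U, if n ∈ S ∧ m ∈ S ∧ IsNbr m n then A m n else 0)
          = ∑ n ∈ U, ∑ m ∈ U, (if m ∈ S ∧ n ∈ S ∧ IsNbr n m then A n m else 0) :=
            Finset.sum_comm
        _ = ∑ n ∈ U, ∑ m ∈ U, -(if n ∈ S ∧ m ∈ S ∧ IsNbr m n then A m n else 0) :=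
            Finset.sum_congr rfl (fun n _ => Finset.sum_congr rfl (fun m _ => hanti n m))
        _ = -(∑ n ∈ U, ∑ m ∈ U, if n ∈ S ∧ m ∈ S ∧ IsNbr m n then A m n else 0) := by
            simp only [Finset.sum_neg_distrib]
    linear_combination h2 / 2
  -- finiteness of the boundary and of neighbor sets in S
  have hNSfin : ∀ m : Fin d → ℤ, {l : Fin d → ℤ | l ∈ S ∧ IsNbr l m}.Finite :=
    fun m => hSfin.subset (fun l hl => hl.1)
  have hBfin : {m : Fin d → ℤ | m ∉ S ∧ ∃ l ∈ S, IsNbr l m}.Finite := by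
    apply hUfin.subset
    rintro m ⟨-, l, hl, hnbr⟩
    exact mem_cube_succ_of_nbr hl (isNbr_symm hnbr)
  have hBU : ∀ {m : Fin d → ℤ}, m ∈ {m : Fin d → ℤ | m ∉ S ∧ ∃ l ∈ S, IsNbr l m} → m ∈ U := by
    rintro m ⟨-, l, hl, hnbr⟩
    rw [hUdef, Set.Finite.mem_toFinset]
    exact mem_cube_succ_of_nbr hl (isNbr_symm hnbr)
  -- the boundary part is the Wronskian
  have bdry : (∑ n ∈ U, ∑ m ∈ U, if n ∈ S ∧ m ∉ S ∧ IsNbr m n then A m n else 0)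
      = wron S θ u := by
    rw [Finset.sum_comm]
    have t3 : ∀ m : Fin d → ℤ,
        (∑' l : {l : Fin d → ℤ // l ∈ S ∧ IsNbr l m}, u l) = ∑ l ∈ (hNSfin m).toFinset, u l :=
      fun m => tsum_set_eq_sum (hNSfin m) u
    have t4 : ∀ m : Fin d → ℤ,
        (∑' l : {l : Fin d → ℤ // l ∈ S ∧ IsNbr l m}, θ l) = ∑ l ∈ (hNSfin m).toFinset, θ l :=
      fun m => tsum_set_eq_sum (hNSfin m) θ
    have t5 : wron S θ u = ∑' m : {m : Fin d → ℤ // m ∉ S ∧ ∃ l ∈ S, IsNbr l m},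
        (θ m * (∑ l ∈ (hNSfin m).toFinset, u l) - u m * (∑ l ∈ (hNSfin m).toFinset, θ l)) := by
      unfold wron
      exact tsum_congr (fun b => by rw [t3, t4])
    have t6 : wron S θ u = ∑ m ∈ hBfin.toFinset,
        (θ m * (∑ l ∈ (hNSfin m).toFinset, u l) - u m * (∑ l ∈ (hNSfin m).toFinset, θ l)) := by
      rw [t5]
      exact tsum_set_eq_sum hBfin
        (fun m => θ m * (∑ l ∈ (hNSfin m).toFinset, u l) - u m * (∑ l ∈ (hNSfin m).toFinset, θ l))
    rw [t6]
    have hBF : hBfin.toFinset = U.filter (fun m => m ∉ S ∧ ∃ l ∈ S, IsNbr l m) := by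
      ext m
      simp only [Finset.mem_filter, Set.Finite.mem_toFinset, Set.mem_setOf_eq]
      constructor
      · intro h; exact ⟨hBU h, h⟩
      · rintro ⟨-, h⟩; exact h
    rw [hBF, Finset.sum_filter]
    apply Finset.sum_congr rfl
    intro m _
    by_cases hmB : m ∉ S ∧ ∃ l ∈ S, IsNbr l m
    · rw [if_pos hmB]
      have step : (∑ n ∈ U, if n ∈ S ∧ m ∉ S ∧ IsNbr m n then A m n else 0)
          = ∑ n ∈ (hNSfin m).toFinset, A m n := by
        rw [← Finset.sum_filter]
        apply Finset.sum_congr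
        · ext n
          simp only [Finset.mem_filter, Set.Finite.mem_toFinset, Set.mem_setOf_eq]
          constructor
          · rintro ⟨-, hn, -, h⟩; exact ⟨hn, isNbr_symm h⟩
          · rintro ⟨hn, h⟩; exact ⟨hSU hn, hn, hmB.1, isNbr_symm h⟩
        · intro x _; rfl
      rw [step, hAdef]
      simp only
      rw [Finset.sum_sub_distrib, ← Finset.mul_sum, ← Finset.sum_mul]
      ring
    · rw [if_neg hmB]
      apply Finset.sum_eq_zero
      intro n _
      apply if_neg
      rintro ⟨hnS, hmS, hnbr⟩
      exact hmB ⟨hmS, n, hnS, isNbr_symm hnbr⟩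
  -- first tsum on the RHS
  have rhs1 : (∑' n : ↥Ω, φ n * u n)
      = ∑ n ∈ U, (if n ∈ S ∧ n ∈ Ω then φ n * u n else 0) := by
    rw [tsum_subtype Ω (fun n => φ n * u n)]
    rw [tsum_eq_sum (s := U) (f := fun n => Ω.indicator (fun n => φ n * u n) n)
      (by
        intro b hb
        have hbφ : φ b = 0 := by
          by_contra hc
          apply hb
          rw [hUdef, Set.Finite.mem_toFinset]
          exact cube_mono (by push_cast; linarith) (hφsupp hc)
        simp [Set.indicator, hbφ])]
    apply Finset.sum_congr rfl
    intro b _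
    by_cases hb : b ∈ Ω
    · by_cases hbS : b ∈ S
      · simp [Set.indicator, hb, hbS]
      · have hbφ : φ b = 0 := by
          by_contra hc
          exact hbS (cube_mono (by push_cast; linarith) (hφsupp hc))
        simp [Set.indicator, hb, hbS, hbφ]
    · simp [Set.indicator, hb]
  -- second tsum on the RHS
  have hSΩfin : (S ∩ Ω).Finite := hSfin.inter_of_left Ω
  have rhs2 : (∑' n : ↥(S ∩ Ω), θ n * u n)
      = ∑ n ∈ U, (if n ∈ S ∧ n ∈ Ω then θ n * u n else 0) := by
    rw [tsum_set_eq_sum hSΩfin (fun n => θ n * u n)]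
    have hfe : hSΩfin.toFinset = U.filter (fun n => n ∈ S ∧ n ∈ Ω) := by
      ext n
      simp only [Finset.mem_filter, Set.Finite.mem_toFinset, Set.mem_inter_iff]
      constructor
      · intro h; exact ⟨hSU h.1, h⟩
      · rintro ⟨-, h⟩; exact h
    rw [hfe, Finset.sum_filter]
  -- assemble
  have lhs_eq : wron S θ u
      = ∑ n ∈ U, (if n ∈ S ∧ n ∈ Ω then φ n * u n + (ε : ℂ) * Complex.I * (θ n * u n) else 0) := by
    calc wron S θ u
        = (∑ n ∈ U, ∑ m ∈ U, if n ∈ S ∧ m ∈ S ∧ IsNbr m n then A m n else 0)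
          + (∑ n ∈ U, ∑ m ∈ U, if n ∈ S ∧ m ∉ S ∧ IsNbr m n then A m n else 0) := by
          rw [sym0, bdry, zero_add]
      _ = ∑ n ∈ U, ∑ m ∈ U, ((if n ∈ S ∧ m ∈ S ∧ IsNbr m n then A m n else 0)
            + (if n ∈ S ∧ m ∉ S ∧ IsNbr m n then A m n else 0)) := by
          rw [← Finset.sum_add_distrib]
          exact Finset.sum_congr rfl (fun n _ => (Finset.sum_add_distrib).symm)
      _ = ∑ n ∈ U, ∑ m ∈ U, (if n ∈ S ∧ m ∈ Ω ∧ IsNbr m n then A m n else 0) :=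
          Finset.sum_congr rfl (fun n _ => Finset.sum_congr rfl
            (fun m _ => (splitS n m).symm.trans (dropΩ n m).symm))
      _ = ∑ n ∈ U, (if n ∈ S ∧ n ∈ Ω then φ n * u n + (ε : ℂ) * Complex.I * (θ n * u n) else 0) :=
          dsum
  rw [lhs_eq, rhs1, rhs2, Finset.mul_sum, ← Finset.sum_add_distrib]
  apply Finset.sum_congr rfl
  intro n _
  by_cases h : n ∈ S ∧ n ∈ Ω
  · simp [h]
  · simp [h]
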